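/- arXiv:2604.03894 — 3 statements merged into one kernel-verified Lean document; each statement's English description precedes it below -/
import Mathlib

section
/- Let f = (f_ij) be a real symmetric 4×4 matrix and define the 3×3 real matrix C by C = [[(−f₁₁−f₂₂+f₃₃+f₄₄)/2, f₁₄−f₂₃, −f₁₃−f₂₄], [−f₁₄−f₂₃, (−f₁₁+f₂₂−f₃₃+f₄₄)/2, f₁₂−f₃₄], [f₁₃−f₂₄, −f₁₂−f₃₄, (−f₁₁+f₂₂+f₃₃−f₄₄)/2]]. Then tr(C Cᵀ) = Σ_{i=1}^{4} (f_ii − (tr f)/4)² + 2 Σ_{1≤i<j≤4} f_ij², which equals the squared Frobenius norm of the trace-free part f − ((tr f)/4)·I₄ of f. -/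
/-!
With `dᵢ = fᵢᵢ - tr f / 4`, so that `Σ dᵢ = 0`, the diagonal entries of `C` are
`-(d₁ + d₂)`, `-(d₁ + d₃)`, `-(d₁ + d₄)`, whose squares sum to `Σ dᵢ²`. The off-diagonal entries
of `C` come in pairs `±a ± b` for `{a, b} = {f₁₄, f₂₃}, {f₁₃, f₂₄}, {f₁₂, f₃₄}`, and
`(a + b)² + (a - b)² = 2a² + 2b²`. For the second identity, the Frobenius sum of a symmetric
matrix splits into its diagonal and two equal off-diagonal halves.
-/

open Matrix Finset

theorem Matrix.trace_mul_transpose_self {m n R : Type*} [Fintype m] [Fintype n]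
    [CommSemiring R] (A : Matrix m n R) :
    (A * Aᵀ).trace = ∑ i, ∑ j, A i j ^ 2 := by
  simp only [trace, diag_apply, mul_apply, transpose_apply, sq]

theorem Finset.univ_eq_insert_Ioi_union_Iio {n : Type*} [Fintype n] [LinearOrder n]
    [LocallyFiniteOrderTop n] [LocallyFiniteOrderBot n] (i : n) :
    (univ : Finset n) = insert i (Ioi i ∪ Iio i) := by
  ext j
  simp only [mem_univ, mem_insert, mem_union, mem_Ioi, mem_Iio, true_iff]
  rcases lt_trichotomy j i with h | h | h <;> simp [h]

theorem Finset.sum_sum_eq_sum_diag_add_sum_Ioi {n M : Type*} [Fintype n] [LinearOrder n]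
    [LocallyFiniteOrderTop n] [LocallyFiniteOrderBot n] [AddCommMonoid M] (g : n → n → M) :
    ∑ i, ∑ j, g i j = ∑ i, g i i + ∑ i, ∑ j ∈ Ioi i, (g i j + g j i) := by
  have hsplit : ∀ i, ∑ j, g i j = g i i + (∑ j ∈ Ioi i, g i j + ∑ j ∈ Iio i, g i j) := by
    intro i
    rw [univ_eq_insert_Ioi_union_Iio i, sum_insert (by simp),
      sum_union (disjoint_left.2 fun j hj hj' => (mem_Ioi.1 hj).not_gt (mem_Iio.1 hj'))]
  have hswap : ∑ i, ∑ j ∈ Iio i, g i j = ∑ i, ∑ j ∈ Ioi i, g j i :=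
    sum_comm' (by simp)
  simp only [hsplit, sum_add_distrib, hswap]

theorem Matrix.IsSymm.sum_sq_sub_smul_one {n R : Type*} [Fintype n] [LinearOrder n]
    [LocallyFiniteOrderTop n] [LocallyFiniteOrderBot n] [DecidableEq n] [CommRing R]
    {A : Matrix n n R} (hA : A.IsSymm) (c : R) :
    ∑ i, ∑ j, (A - c • 1) i j ^ 2 = ∑ i, (A i i - c) ^ 2 + 2 * ∑ i, ∑ j ∈ Ioi i, A i j ^ 2 := by
  rw [sum_sum_eq_sum_diag_add_sum_Ioi, mul_sum]
  congr 1
  · simp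
  · refine sum_congr rfl fun i _ => ?_
    rw [mul_sum]
    refine sum_congr rfl fun j hj => ?_
    have hij : i ≠ j := (mem_Ioi.mp hj).ne
    simp only [sub_apply, smul_apply, one_apply_ne hij, one_apply_ne hij.symm, smul_eq_mul,
      mul_zero, sub_zero, hA.apply i j]
    ring

theorem Fin.sum_sum_Ioi_four {M : Type*} [AddCommMonoid M] (g : Fin 4 → Fin 4 → M) :
    ∑ i, ∑ j ∈ Ioi i, g i j = g 0 1 + g 0 2 + g 0 3 + g 1 2 + g 1 3 + g 2 3 := by
  rw [Fin.sum_univ_four, show Ioi (0 : Fin 4) = {1, 2, 3} by decide,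
    show Ioi (1 : Fin 4) = {2, 3} by decide, show Ioi (2 : Fin 4) = {3} by decide,
    show Ioi (3 : Fin 4) = ∅ by decide]
  simp [add_assoc]

/-- For a symmetric 4×4 real matrix `f`, the matrix `C` built from its entries satisfies
`tr(C Cᵀ) = Σᵢ (fᵢᵢ − (tr f)/4)² + 2 Σ_{i<j} fᵢⱼ²`, which equals the squared Frobenius
norm of the trace-free part `f − ((tr f)/4)·I` of `f`. -/
theorem stmt3 (f : Matrix (Fin 4) (Fin 4) ℝ) (hf : f.IsSymm)
    (C : Matrix (Fin 3) (Fin 3) ℝ)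
    (hC : C = !![(-f 0 0 - f 1 1 + f 2 2 + f 3 3) / 2, f 0 3 - f 1 2, -(f 0 2) - f 1 3;
                 -(f 0 3) - f 1 2, (-f 0 0 + f 1 1 - f 2 2 + f 3 3) / 2, f 0 1 - f 2 3;
                 f 0 2 - f 1 3, -(f 0 1) - f 2 3, (-f 0 0 + f 1 1 + f 2 2 - f 3 3) / 2]) :
    (C * Cᵀ).trace
      = (∑ i : Fin 4, (f i i - f.trace / 4) ^ 2)
        + 2 * ∑ i : Fin 4, ∑ j ∈ Finset.Ioi i, f i j ^ 2 ∧
    (∑ i : Fin 4, (f i i - f.trace / 4) ^ 2)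
        + 2 * ∑ i : Fin 4, ∑ j ∈ Finset.Ioi i, f i j ^ 2
      = ∑ i : Fin 4, ∑ j : Fin 4, (f - (f.trace / 4) • (1 : Matrix (Fin 4) (Fin 4) ℝ)) i j ^ 2 := by
  refine ⟨?_, (hf.sum_sq_sub_smul_one _).symm⟩
  rw [trace_mul_transpose_self, hC, Fin.sum_sum_Ioi_four]
  simp only [trace, diag_apply, Fin.sum_univ_three, Fin.sum_univ_four, of_apply, Matrix.cons_val]
  ring
end

section
/- The obstruction vectors satisfy the identity |𝒪₁|² + |𝒪₂|² + |𝒪₃|² = ½ Σ_{1≤i<j≤4} f_ij². -/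
open scoped RealInnerProductSpace

/-!
Since `Pᵢ` and `*Pᵢ` are, up to sign, orthonormal basis bivectors, `|𝒪ᵢ|²` is a quarter of the
sum of squares of the other four coordinates of `Ĥ(Pᵢ)`. By the defining formula these are
`±f_jk`, one for each basis bivector sharing exactly one index with `Pᵢ = e₁∧e_{i+1}`; over
`i = 1, 2, 3` every off-diagonal entry `f_jk`, `j < k`, occurs exactly twice.
-/

/-- The pairs `(i,j)`, `i < j`, indexing the orthonormal bivector basis
`e₁∧e₂, e₁∧e₃, e₁∧e₄, e₂∧e₃, e₂∧e₄, e₃∧e₄` of `Λ²(ℝ⁴) ≅ ℝ⁶`. -/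
def pairIdx : Fin 6 → Fin 4 × Fin 4 :=
  ![(0, 1), (0, 2), (0, 3), (1, 2), (1, 3), (2, 3)]

/-- The bivector basis vectors of `Λ² ≅ ℝ⁶`. -/
noncomputable def bvec (m : Fin 6) : EuclideanSpace ℝ (Fin 6) :=
  EuclideanSpace.single m 1

/-- Kronecker delta on `Fin 4`. -/
def kdelta (i j : Fin 4) : ℝ := if i = j then 1 else 0

/-- `P₁ = e₁∧e₂`, `P₂ = e₁∧e₃`, `P₃ = e₁∧e₄`. -/
noncomputable def Pvec : Fin 3 → EuclideanSpace ℝ (Fin 6) :=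
  ![bvec 0, bvec 1, bvec 2]

/-- `*P₁ = e₃∧e₄`, `*P₂ = −e₂∧e₄`, `*P₃ = e₂∧e₃` (Hodge star images). -/
noncomputable def PvecStar : Fin 3 → EuclideanSpace ℝ (Fin 6) :=
  ![bvec 5, -bvec 4, bvec 3]

/-- The statement that `H` is the operator `Ĥ` on `Λ² ≅ ℝ⁶` determined by
`⟨Ĥ(e_i∧e_j), e_k∧e_l⟩ = f_il δ_jk + f_jk δ_il − f_ik δ_jl − f_jl δ_ik`. -/
def IsHhat (f : Matrix (Fin 4) (Fin 4) ℝ)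
    (H : EuclideanSpace ℝ (Fin 6) →ₗ[ℝ] EuclideanSpace ℝ (Fin 6)) : Prop :=
  ∀ m n : Fin 6,
    ⟪H (bvec m), bvec n⟫ =
      f (pairIdx m).1 (pairIdx n).2 * kdelta (pairIdx m).2 (pairIdx n).1
      + f (pairIdx m).2 (pairIdx n).1 * kdelta (pairIdx m).1 (pairIdx n).2
      - f (pairIdx m).1 (pairIdx n).1 * kdelta (pairIdx m).2 (pairIdx n).2
      - f (pairIdx m).2 (pairIdx n).2 * kdelta (pairIdx m).1 (pairIdx n).1

/-- The obstruction vector `𝒪ᵢ`: the orthogonal projection of `½·Ĥ(Pᵢ)` onto the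
orthogonal complement of `span{Pᵢ, *Pᵢ}` in `ℝ⁶`. -/
noncomputable def Ovec (H : EuclideanSpace ℝ (Fin 6) →ₗ[ℝ] EuclideanSpace ℝ (Fin 6))
    (i : Fin 3) : (Submodule.span ℝ {Pvec i, PvecStar i})ᗮ :=
  Submodule.orthogonalProjectionOnto (Submodule.span ℝ {Pvec i, PvecStar i})ᗮ ((1 / 2 : ℝ) • H (Pvec i))

section OrthonormalPair

variable {E : Type*} [NormedAddCommGroup E] [InnerProductSpace ℝ E] {a b : E}
  [(Submodule.span ℝ {a, b}).HasOrthogonalProjection]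

theorem starProjection_span_pair (ha : ‖a‖ = 1) (hb : ‖b‖ = 1) (hab : ⟪a, b⟫ = 0) (u : E) :
    (Submodule.span ℝ {a, b}).starProjection u = ⟪a, u⟫ • a + ⟪b, u⟫ • b := by
  refine Submodule.eq_starProjection_of_mem_of_inner_eq_zero (K := Submodule.span ℝ {a, b})
    (Submodule.mem_span_pair.2 ⟨⟪a, u⟫, ⟪b, u⟫, rfl⟩) fun w hw => ?_
  obtain ⟨c, d, rfl⟩ := Submodule.mem_span_pair.1 hw
  have hba : ⟪b, a⟫ = 0 := by rwa [real_inner_comm]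
  simp only [inner_add_right, inner_smul_right, inner_sub_left, inner_add_left,
    inner_smul_left, real_inner_self_eq_norm_sq, ha, hb, hab, hba, real_inner_comm u,
    conj_trivial]
  ring

theorem norm_sq_orthogonalProjectionOnto_orthogonal_span_pair (ha : ‖a‖ = 1) (hb : ‖b‖ = 1)
    (hab : ⟪a, b⟫ = 0) (u : E) :
    ‖(Submodule.span ℝ {a, b})ᗮ.orthogonalProjectionOnto u‖ ^ 2 =
      ‖u‖ ^ 2 - ⟪a, u⟫ ^ 2 - ⟪b, u⟫ ^ 2 := by
  have hsplit := Submodule.norm_sq_eq_add_norm_sq_projection u (Submodule.span ℝ {a, b})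
  rw [Submodule.coe_norm, ← Submodule.starProjection_apply, starProjection_span_pair ha hb hab,
    norm_add_sq_real, norm_smul, norm_smul, real_inner_smul_left, real_inner_smul_right, hab, ha, hb] at hsplit
  simp only [Real.norm_eq_abs, mul_one, mul_zero, add_zero, sq_abs] at hsplit
  linarith

end OrthonormalPair

theorem EuclideanSpace.norm_sq_eq_sum_inner_single_sq {ι : Type*} [Fintype ι] [DecidableEq ι]
    (x : EuclideanSpace ℝ ι) :
    ‖x‖ ^ 2 = ∑ i, ⟪x, EuclideanSpace.single i 1⟫ ^ 2 := by
  simpa using ((EuclideanSpace.basisFun ι ℝ).sum_sq_inner_left x).symm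

theorem norm_sq_Ovec (H : EuclideanSpace ℝ (Fin 6) →ₗ[ℝ] EuclideanSpace ℝ (Fin 6)) (i : Fin 3) :
    ‖Ovec H i‖ ^ 2 =
      (‖H (Pvec i)‖ ^ 2 - ⟪H (Pvec i), Pvec i⟫ ^ 2 - ⟪H (Pvec i), PvecStar i⟫ ^ 2) / 4 := by
  have hP : ‖Pvec i‖ = 1 := by fin_cases i <;> simp [Pvec, bvec]
  have hS : ‖PvecStar i‖ = 1 := by fin_cases i <;> simp [PvecStar, bvec]
  have hPS : ⟪Pvec i, PvecStar i⟫ = 0 := by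
    fin_cases i <;> simp [Pvec, PvecStar, bvec, EuclideanSpace.inner_single_left]
  rw [Ovec, norm_sq_orthogonalProjectionOnto_orthogonal_span_pair hP hS hPS, norm_smul,
    real_inner_smul_right, real_inner_smul_right]
  simp only [real_inner_comm (H (Pvec i))]
  rw [Real.norm_of_nonneg (by norm_num)]
  ring

theorem sum_Ioi_fin_four {M : Type*} [AddCommMonoid M] (g : Fin 4 → Fin 4 → M) :
    ∑ i : Fin 4, ∑ j ∈ Finset.Ioi i, g i j = g 0 1 + g 0 2 + g 0 3 + g 1 2 + g 1 3 + g 2 3 := by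
  simp [Fin.sum_Ioi_succ, Fin.sum_univ_succ, add_assoc]

/-- The obstruction vectors satisfy `|𝒪₁|² + |𝒪₂|² + |𝒪₃|² = ½ Σ_{i<j} fᵢⱼ²`. -/
theorem stmt6 (f : Matrix (Fin 4) (Fin 4) ℝ) (hf : f.IsSymm)
    (H : EuclideanSpace ℝ (Fin 6) →ₗ[ℝ] EuclideanSpace ℝ (Fin 6)) (hH : IsHhat f H) :
    ‖Ovec H 0‖ ^ 2 + ‖Ovec H 1‖ ^ 2 + ‖Ovec H 2‖ ^ 2
      = (1 / 2) * ∑ i : Fin 4, ∑ j ∈ Finset.Ioi i, f i j ^ 2 := by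
  have hparseval (m : Fin 6) : ‖H (bvec m)‖ ^ 2 = ∑ n, ⟪H (bvec m), bvec n⟫ ^ 2 :=
    EuclideanSpace.norm_sq_eq_sum_inner_single_sq _
  unfold IsHhat at hH
  rw [norm_sq_Ovec, norm_sq_Ovec, norm_sq_Ovec]
  simp only [sum_Ioi_fin_four, Pvec, PvecStar, Matrix.cons_val, inner_neg_right, neg_sq,
    hparseval, Fin.sum_univ_six, hH]
  simp only [pairIdx, kdelta, hf.apply, Matrix.cons_val, Matrix.cons_val_zero, Matrix.cons_val_one,
    Fin.reduceEq, ↓reduceIte, mul_zero, mul_one, add_zero, sub_zero, zero_sub, sub_self]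
  ring
end

section
/- For each i = 1,2,3, the orthogonal projection of ½·Ĥ(*Pᵢ) onto the orthogonal complement of span{Pᵢ, *Pᵢ} has the same squared norm as 𝒪ᵢ; in particular, this projection vanishes if and only if 𝒪ᵢ = 0. (Thus the same off-diagonal entries of f that obstruct Pᵢ also obstruct *Pᵢ.) -/
/-!
Writing `*` for the Hodge star of `Λ²ℝ⁴`, the operator `Ĥ = -(f ∧ id)` satisfies
`Ĥ * + * Ĥ = -(tr f) *`: on `e₁∧e₂` the diagonal entries of `f` contribute
`-(f₃₃ + f₄₄) - (f₁₁ + f₂₂)` times `e₃∧e₄`, and the off-diagonal ones cancel by symmetry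
of `f`. Hence `½Ĥ(*Pᵢ) + *(½Ĥ Pᵢ)` lies in `span{Pᵢ, *Pᵢ}`. Since `*` is an involutive
isometry exchanging `Pᵢ` and `*Pᵢ`, it preserves this span and its orthogonal complement,
so it commutes with the projection onto the complement, and the two projections differ
by `-*`, which preserves norms.
-/

open scoped RealInnerProductSpace

section

variable {𝕜 E : Type*} [RCLike 𝕜] [NormedAddCommGroup E] [InnerProductSpace 𝕜 E]

theorem Submodule.map_span_pair_eq_of_involutive (S : E ≃ₗᵢ[𝕜] E) (hS : Function.Involutive S)
    (P : E) :
    (span 𝕜 {P, S P}).map (S.toLinearEquiv : E →ₗ[𝕜] E) = span 𝕜 {P, S P} := by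
  rw [map_span, Set.image_pair]
  simp [hS P, Set.pair_comm]

theorem Submodule.norm_orthogonalProjectionOnto_orthogonal_eq_of_add_mem (S : E ≃ₗᵢ[𝕜] E)
    {K : Submodule 𝕜 E} [K.HasOrthogonalProjection]
    (hK : K.map (S.toLinearEquiv : E →ₗ[𝕜] E) = K) {u w : E} (h : w + S u ∈ K) :
    ‖Kᗮ.orthogonalProjectionOnto w‖ = ‖Kᗮ.orthogonalProjectionOnto u‖ := by
  have hcomm : Kᗮ.starProjection (S u) = S (Kᗮ.starProjection u) := by
    have hK' : Kᗮ.map (S.toLinearEquiv : E →ₗ[𝕜] E) = Kᗮ := by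
      rw [map_orthogonal_equiv, hK]
    simpa [hK'] using starProjection_map_apply S Kᗮ (S u)
  have hw : Kᗮ.orthogonalProjectionOnto w = -Kᗮ.orthogonalProjectionOnto (S u) := by
    rw [eq_neg_iff_add_eq_zero, ← map_add]
    exact orthogonalProjectionOnto_orthogonal_apply_eq_zero h
  rw [hw, norm_neg, coe_norm, coe_norm, ← starProjection_apply, ← starProjection_apply, hcomm,
    S.norm_map]

end

/- In the ordering of `pairIdx`, the pair complementary to `pairIdx m` is `pairIdx m.rev`, and
`hodgeSign m` is the sign of the permutation `(pairIdx m, pairIdx m.rev)` of `(0, 1, 2, 3)`. -/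
def hodgeSign : Fin 6 → ℝ := ![1, -1, 1, 1, -1, 1]

theorem hodgeSign_mul_hodgeSign_rev (m : Fin 6) : hodgeSign m * hodgeSign m.rev = 1 := by
  fin_cases m <;> simp [hodgeSign, Fin.rev]

theorem hodgeSign_sq (m : Fin 6) : hodgeSign m ^ 2 = 1 := by
  fin_cases m <;> norm_num [hodgeSign]

noncomputable def hodgeStarLinearMap :
    EuclideanSpace ℝ (Fin 6) →ₗ[ℝ] EuclideanSpace ℝ (Fin 6) where
  toFun v := WithLp.toLp 2 fun m => hodgeSign m * v m.rev
  map_add' v w := by ext m; simp [mul_add]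
  map_smul' c v := by ext m; simp [mul_left_comm]

theorem hodgeStarLinearMap_apply (v : EuclideanSpace ℝ (Fin 6)) (m : Fin 6) :
    hodgeStarLinearMap v m = hodgeSign m * v m.rev := rfl

theorem hodgeStarLinearMap_involutive : Function.Involutive hodgeStarLinearMap := by
  intro v; ext m
  simp only [hodgeStarLinearMap_apply, Fin.rev_rev, ← mul_assoc, hodgeSign_mul_hodgeSign_rev,
    one_mul]

theorem inner_hodgeStarLinearMap (v w : EuclideanSpace ℝ (Fin 6)) :
    ⟪hodgeStarLinearMap v, hodgeStarLinearMap w⟫ = ⟪v, w⟫ := by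
  simp only [PiLp.inner_apply, hodgeStarLinearMap_apply, RCLike.inner_apply, conj_trivial]
  rw [← Equiv.sum_comp Fin.revPerm]
  refine Finset.sum_congr rfl fun m _ => ?_
  simp only [Fin.revPerm_apply, Fin.rev_rev]
  linear_combination (v m * w m) * hodgeSign_sq m.rev

noncomputable def hodgeStar : EuclideanSpace ℝ (Fin 6) ≃ₗᵢ[ℝ] EuclideanSpace ℝ (Fin 6) :=
  (LinearEquiv.ofInvolutive hodgeStarLinearMap hodgeStarLinearMap_involutive).isometryOfInner
    inner_hodgeStarLinearMap

theorem hodgeStar_apply (v : EuclideanSpace ℝ (Fin 6)) (m : Fin 6) :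
    hodgeStar v m = hodgeSign m * v m.rev := rfl

theorem hodgeStar_involutive : Function.Involutive hodgeStar := hodgeStarLinearMap_involutive

theorem hodgeStar_bvec (m : Fin 6) : hodgeStar (bvec m) = hodgeSign m.rev • bvec m.rev := by
  ext n
  by_cases h : n = m.rev
  · subst h; simp [hodgeStar_apply, bvec]
  · have : n.rev ≠ m := fun h' => h (by rw [← h', Fin.rev_rev])
    simp [hodgeStar_apply, bvec, h, this]

theorem hodgeStar_Pvec (i : Fin 3) : hodgeStar (Pvec i) = PvecStar i := by
  fin_cases i <;> simp [hodgeStar_bvec, Pvec, PvecStar, hodgeSign]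

section

variable {f : Matrix (Fin 4) (Fin 4) ℝ}
  {H : EuclideanSpace ℝ (Fin 6) →ₗ[ℝ] EuclideanSpace ℝ (Fin 6)}

theorem IsHhat.apply_bvec (hH : IsHhat f H) (m n : Fin 6) :
    H (bvec m) n =
      f (pairIdx m).1 (pairIdx n).2 * kdelta (pairIdx m).2 (pairIdx n).1
      + f (pairIdx m).2 (pairIdx n).1 * kdelta (pairIdx m).1 (pairIdx n).2
      - f (pairIdx m).1 (pairIdx n).1 * kdelta (pairIdx m).2 (pairIdx n).2
      - f (pairIdx m).2 (pairIdx n).2 * kdelta (pairIdx m).1 (pairIdx n).1 := by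
  simpa [bvec, EuclideanSpace.inner_single_right] using hH m n

theorem IsHhat.apply_hodgeStar_add_hodgeStar_apply_bvec (hH : IsHhat f H) (hf : f.IsSymm)
    (m : Fin 6) :
    H (hodgeStar (bvec m)) + hodgeStar (H (bvec m)) = -f.trace • hodgeStar (bvec m) := by
  have hsym : ∀ a b : Fin 4, f a b = f b a := fun a b => hf.apply b a
  ext n
  simp only [PiLp.add_apply, PiLp.smul_apply, smul_eq_mul, hodgeStar_bvec, map_smul,
    hodgeStar_apply, hH.apply_bvec]
  fin_cases m <;> fin_cases n <;>
    simp [pairIdx, kdelta, hodgeSign, bvec, Fin.rev, Matrix.trace, Fin.sum_univ_four, hsym 1 0,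
      hsym 2 0, hsym 3 0, hsym 2 1, hsym 3 1, hsym 3 2] <;> ring

theorem IsHhat.apply_hodgeStar_add_hodgeStar_apply (hH : IsHhat f H) (hf : f.IsSymm)
    (v : EuclideanSpace ℝ (Fin 6)) :
    H (hodgeStar v) + hodgeStar (H v) = -f.trace • hodgeStar v := by
  have hmaps : H ∘ₗ hodgeStar.toLinearMap + hodgeStar.toLinearMap ∘ₗ H =
      -f.trace • hodgeStar.toLinearMap :=
    (EuclideanSpace.basisFun (Fin 6) ℝ).toBasis.ext fun m => by
      simpa [bvec] using hH.apply_hodgeStar_add_hodgeStar_apply_bvec hf m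
  exact LinearMap.congr_fun hmaps v

end

/-- For each `i`, the orthogonal projection of `½·Ĥ(*Pᵢ)` onto the orthogonal complement of
`span{Pᵢ, *Pᵢ}` has the same squared norm as `𝒪ᵢ`; in particular it vanishes iff `𝒪ᵢ = 0`. -/
theorem stmt8 (f : Matrix (Fin 4) (Fin 4) ℝ) (hf : f.IsSymm)
    (H : EuclideanSpace ℝ (Fin 6) →ₗ[ℝ] EuclideanSpace ℝ (Fin 6)) (hH : IsHhat f H) :
    ∀ i : Fin 3,
      ‖Submodule.orthogonalProjectionOnto (Submodule.span ℝ {Pvec i, PvecStar i})ᗮ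
          ((1 / 2 : ℝ) • H (PvecStar i))‖ ^ 2 = ‖Ovec H i‖ ^ 2 ∧
      (Submodule.orthogonalProjectionOnto (Submodule.span ℝ {Pvec i, PvecStar i})ᗮ
          ((1 / 2 : ℝ) • H (PvecStar i)) = 0 ↔ Ovec H i = 0) := by
  intro i
  have hK := Submodule.map_span_pair_eq_of_involutive hodgeStar hodgeStar_involutive (Pvec i)
  rw [hodgeStar_Pvec] at hK
  have hmem : (1 / 2 : ℝ) • H (PvecStar i) + hodgeStar ((1 / 2 : ℝ) • H (Pvec i)) ∈
      Submodule.span ℝ {Pvec i, PvecStar i} := by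
    rw [map_smul, ← smul_add, ← hodgeStar_Pvec, hH.apply_hodgeStar_add_hodgeStar_apply hf,
      hodgeStar_Pvec]
    exact Submodule.smul_mem _ _ (Submodule.smul_mem _ _ (Submodule.subset_span (by simp)))
  have hnorm := Submodule.norm_orthogonalProjectionOnto_orthogonal_eq_of_add_mem hodgeStar hK hmem
  exact ⟨by rw [hnorm, Ovec], by rw [← norm_eq_zero, hnorm, norm_eq_zero, Ovec]⟩
end
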